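/- arXiv:2007.14747 — 2 statements merged into one kernel-verified Lean document; each statement's English description precedes it below -/
import Mathlib

section
/- Let m ∈ ℕ and let v : (0,∞) → ℝ be continuous with sufficient decay at infinity (say, decaying faster than any polynomial). Then for every r > 0: D_r^m ∫_r^∞ (t² − r²)^m v(t) t dt = (−1)^m m! ∫_r^∞ v(t) t dt, and applying D_r once more, D_r^(m+1) ∫_r^∞ (t² − r²)^m v(t) t dt = (−1)^(m+1) (m!/2) v(r), where D_r denotes the operator g ↦ (1/(2r)) dg/dr and D_r^k its k-fold iterate. -/
open MeasureTheory Filter Topology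

noncomputable section

/-- Spatial convolution on `ℝ^d`: `(g ⊛ h)(x) = ∫ g(y) h(x-y) dy`. -/
def sconv {d : ℕ} (g h : EuclideanSpace ℝ (Fin d) → ℝ) :
    EuclideanSpace ℝ (Fin d) → ℝ :=
  fun x => ∫ y, g y * h (x - y)

/-- Convolution on `ℝ`. -/
def conv1 (g h : ℝ → ℝ) : ℝ → ℝ := fun t => ∫ s, g s * h (t - s)

/-- `d`-dimensional Fourier transform with the convention `F f(ξ) = ∫ f(x) e^{-i x·ξ} dx`. -/
def Fd {d : ℕ} (f : EuclideanSpace ℝ (Fin d) → ℝ) (ξ : EuclideanSpace ℝ (Fin d)) : ℂ :=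
  ∫ x, Complex.exp (-Complex.I * ((inner ℝ x ξ : ℝ) : ℂ)) * (f x : ℂ)

/-- one-dimensional Fourier transform `F v(ω) = ∫ v(t) e^{-i t ω} dt`. -/
def F1 (v : ℝ → ℝ) (ω : ℝ) : ℂ :=
  ∫ t : ℝ, Complex.exp (-Complex.I * ((t * ω : ℝ) : ℂ)) * (v t : ℂ)

/-- inverse `d`-dimensional Fourier transform `F⁻¹ g(x) = (2π)^{-d} ∫ g(ξ) e^{i x·ξ} dξ`. -/
def Fdinv {d : ℕ} (g : EuclideanSpace ℝ (Fin d) → ℂ) (x : EuclideanSpace ℝ (Fin d)) : ℂ :=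
  (((2 * Real.pi) ^ d : ℝ) : ℂ)⁻¹ * ∫ ξ, Complex.exp (Complex.I * ((inner ℝ x ξ : ℝ) : ℂ)) * g ξ

/-- Laplacian in the spatial variables. -/
def lap {d : ℕ} (f : EuclideanSpace ℝ (Fin d) → ℝ) (x : EuclideanSpace ℝ (Fin d)) : ℝ :=
  ∑ i : Fin d, iteratedDeriv 2 (fun r : ℝ => f (x + r • EuclideanSpace.single i (1 : ℝ))) 0

/-- `p` is a smooth solution of the wave equation `∂ₜ²p - Δp = 0` with initial data `(f, 0)`. -/
def IsWaveSol {d : ℕ} (p : EuclideanSpace ℝ (Fin d) → ℝ → ℝ)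
    (f : EuclideanSpace ℝ (Fin d) → ℝ) : Prop :=
  ContDiff ℝ (⊤ : ℕ∞) (fun q : EuclideanSpace ℝ (Fin d) × ℝ => p q.1 q.2) ∧
  (∀ x t, iteratedDeriv 2 (p x) t = lap (fun y => p y t) x) ∧
  (∀ x, p x 0 = f x) ∧
  (∀ x, deriv (p x) 0 = 0)

/-- `k`-fold iterate of the operator `(1/(2t)) d/dt`. -/
def Dop : ℕ → (ℝ → ℝ) → (ℝ → ℝ)
  | 0, v => v
  | k + 1, v => fun t => deriv (Dop k v) t / (2 * t)

/-- The radial profile of `R♯v` (formula (9) of the paper, evaluated at `r = ‖x‖`). -/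
def RsharpProfile (d : ℕ) (v : ℝ → ℝ) (r : ℝ) : ℝ :=
  if Odd d then
    ((-1 : ℝ) ^ ((d - 1) / 2) / Real.sqrt (Real.pi ^ (d - 1))) * Dop ((d - 1) / 2) v r
  else
    (2 * (-1 : ℝ) ^ ((d - 2) / 2) / Real.sqrt (Real.pi ^ d)) *
      ∫ t in Set.Ioi r, Dop (d / 2) v t / Real.sqrt (t ^ 2 - r ^ 2) * t

/-- The radial function `R♯v` on `ℝ^d`. -/
def Rsharp (d : ℕ) (v : ℝ → ℝ) (x : EuclideanSpace ℝ (Fin d)) : ℝ :=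
  RsharpProfile d v ‖x‖

/-- total measure `ω_{d-2} = 2 π^((d-1)/2) / Γ((d-1)/2)` of the unit sphere `S^{d-2}`. -/
def sphereVol (d : ℕ) : ℝ :=
  2 * Real.pi ^ (((d : ℝ) - 1) / 2) / Real.Gamma (((d : ℝ) - 1) / 2)

/-- radial Radon profile `Ru` of a radial function with profile `ub`. -/
def radonProfile (d : ℕ) (ub : ℝ → ℝ) (t : ℝ) : ℝ :=
  if d = 1 then ub t
  else sphereVol d * ∫ s in Set.Ioi |t|, ub s * (s ^ 2 - t ^ 2) ^ (((d : ℝ) - 3) / 2) * s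

/-- Convolutional frame on `ℝ^d` with frame bounds `A`, `B`. -/
def ConvFrame {d : ℕ} {Λ : Type*} (u : Λ → EuclideanSpace ℝ (Fin d) → ℝ) (A B : ℝ) : Prop :=
  ∀ f : EuclideanSpace ℝ (Fin d) → ℝ, MemLp f 2 volume →
    (A * ∫ x, f x ^ 2) ≤ (∑' l, ∫ x, sconv f (u l) x ^ 2) ∧
    (∑' l, ∫ x, sconv f (u l) x ^ 2) ≤ B * ∫ x, f x ^ 2

/-- Convolutional frame on `ℝ` with frame bounds `A`, `B`. -/
def ConvFrame1 {Λ : Type*} (v : Λ → ℝ → ℝ) (A B : ℝ) : Prop :=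
  ∀ g : ℝ → ℝ, MemLp g 2 volume →
    (A * ∫ t : ℝ, g t ^ 2) ≤ (∑' l, ∫ t : ℝ, conv1 g (v l) t ^ 2) ∧
    (∑' l, ∫ t : ℝ, conv1 g (v l) t ^ 2) ≤ B * ∫ t : ℝ, g t ^ 2

/-- The series `Σ_λ g_λ` converges unconditionally in `L²(ℝ^d)` to `f`. -/
def L2SumTo {d : ℕ} {Λ : Type*} (g : Λ → EuclideanSpace ℝ (Fin d) → ℝ)
    (f : EuclideanSpace ℝ (Fin d) → ℝ) : Prop :=
  Tendsto (fun F : Finset Λ => ∫ x, (∑ l ∈ F, g l x - f x) ^ 2) atTop (nhds 0)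

/-- `v` is (the restriction of) a Schwartz function. -/
def IsSchwartz1 (v : ℝ → ℝ) : Prop := ∃ V : SchwartzMap ℝ ℝ, ∀ t, V t = v t

/-- The map `s ↦ v(√|s|)` is of class `C^⌈(d-1)/2⌉`. -/
def SmoothRootClass (d : ℕ) (v : ℝ → ℝ) : Prop :=
  ContDiff ℝ ((⌈((d : ℝ) - 1) / 2⌉₊ : ℕ) : ℕ∞) fun s : ℝ => v (Real.sqrt |s|)

/-- decay faster than any polynomial at infinity. -/
def RapidDecay (φ : ℝ → ℝ) : Prop := ∀ n : ℕ, ∃ C : ℝ, ∀ t : ℝ, 1 ≤ t → |φ t| * t ^ n ≤ C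

end

/-!
Expanding `(t² - s²)^m` binomially writes `G_m(s) = ∫_s^∞ (t² - s²)^m v(t) t dt` as a polynomial
in `s` with coefficients the tail integrals `∫_s^∞ v(t) t^(2k+1) dt`, which are differentiable by
the fundamental theorem of calculus since rapid decay makes `v(t) t^n` integrable at infinity.
Differentiating term by term and reassembling, the boundary terms add up to the kernel on the
diagonal `t = s`, which vanishes, so `G_{m+1}' (s) = -2 (m+1) s G_m(s)`, i.e. `D_r G_{m+1} = -(m+1) G_m`.
Iterating gives `D_r^m G_m = (-1)^m m! G_0`, and `G_0' (r) = -v(r) r` gives the last step.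
-/

open Set Filter Topology MeasureTheory Asymptotics

lemma RapidDecay.isBigO_mul_pow {φ : ℝ → ℝ} (hφ : RapidDecay φ) (n : ℕ) :
    (fun t => φ t * t ^ n) =O[atTop] fun t => t ^ (-2 : ℝ) := by
  obtain ⟨C, hC⟩ := hφ (n + 2)
  refine IsBigO.of_bound C ?_
  filter_upwards [eventually_ge_atTop 1] with t ht
  have ht0 : 0 < t := one_pos.trans_le ht
  have hnorm : ‖t ^ (-2 : ℝ)‖ = (t ^ 2)⁻¹ := by
    rw [Real.norm_of_nonneg (by positivity), Real.rpow_neg ht0.le, Real.rpow_two]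
  rw [hnorm, ← div_eq_mul_inv, le_div_iff₀ (by positivity), norm_mul, norm_pow, Real.norm_eq_abs,
    Real.norm_of_nonneg ht0.le, mul_assoc, ← pow_add]
  exact hC t ht

lemma RapidDecay.integrableOn_Ioi_mul_pow {φ : ℝ → ℝ} (hφ : RapidDecay φ)
    (hc : ContinuousOn φ (Ioi 0)) (n : ℕ) {s : ℝ} (hs : 0 < s) :
    IntegrableOn (fun t => φ t * t ^ n) (Ioi s) := by
  have hloc : LocallyIntegrableOn (fun t => φ t * t ^ n) (Ici s) :=
    ((hc.mono fun t ht => hs.trans_le ht).mul (continuous_pow n).continuousOn).locallyIntegrableOn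
      measurableSet_Ici
  exact (hloc.integrableOn_of_isBigO_atTop (hφ.isBigO_mul_pow n)
    (integrableAtFilter_rpow_atTop_iff.mpr (by norm_num))).mono_set Ioi_subset_Ici_self

lemma hasDerivAt_integral_Ioi {f : ℝ → ℝ} {a s : ℝ} (has : a < s) (hf : IntegrableOn f (Ioi a))
    (hfc : ContinuousOn f (Ioi a)) :
    HasDerivAt (fun x => ∫ t in Ioi x, f t) (-f s) s := by
  have hint : IntervalIntegrable f volume a s :=
    (intervalIntegrable_iff_integrableOn_Ioc_of_le has.le).mpr (hf.mono_set Ioc_subset_Ioi_self)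
  have hderiv : HasDerivAt (fun x => ∫ t in a..x, f t) (f s) s :=
    intervalIntegral.integral_hasDerivAt_right hint
      (hfc.stronglyMeasurableAtFilter isOpen_Ioi s has) (hfc.continuousAt (Ioi_mem_nhds has))
  refine (hderiv.const_sub (∫ t in Ioi a, f t)).congr_of_eventuallyEq ?_
  filter_upwards [Ioi_mem_nhds has] with x hx
  rw [← intervalIntegral.integral_Ioi_sub_Ioi hf hx.le, sub_sub_cancel]

lemma hasDerivAt_integral_Ioi_sum_mul {ι : Type*} (S : Finset ι) {p f : ι → ℝ → ℝ} {p' : ι → ℝ}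
    {a s : ℝ} (has : a < s) (hp : ∀ k ∈ S, HasDerivAt (p k) (p' k) s)
    (hf : ∀ k ∈ S, IntegrableOn (f k) (Ioi a)) (hfc : ∀ k ∈ S, ContinuousOn (f k) (Ioi a)) :
    HasDerivAt (fun x => ∫ t in Ioi x, ∑ k ∈ S, p k x * f k t)
      ((∫ t in Ioi s, ∑ k ∈ S, p' k * f k t) - ∑ k ∈ S, p k s * f k s) s := by
  have hsum : HasDerivAt (fun x => ∑ k ∈ S, p k x * ∫ t in Ioi x, f k t)
      (∑ k ∈ S, ((p' k * ∫ t in Ioi s, f k t) + p k s * -f k s)) s :=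
    HasDerivAt.fun_sum fun k hk =>
      (hp k hk).fun_mul (hasDerivAt_integral_Ioi has (hf k hk) (hfc k hk))
  have hint : ∀ x, a ≤ x → ∀ c : ι → ℝ,
      ∫ t in Ioi x, ∑ k ∈ S, c k * f k t = ∑ k ∈ S, c k * ∫ t in Ioi x, f k t := fun x hx c => by
    rw [integral_finsetSum _ fun k hk => ((hf k hk).mono_set (Ioi_subset_Ioi hx)).const_mul _]
    simp only [integral_const_mul]
  have hev : (fun x => ∫ t in Ioi x, ∑ k ∈ S, p k x * f k t) =ᶠ[𝓝 s]
      fun x => ∑ k ∈ S, p k x * ∫ t in Ioi x, f k t := by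
    filter_upwards [Ioi_mem_nhds has] with x hx
    exact hint x hx.le _
  refine (hsum.congr_of_eventuallyEq hev).congr_deriv ?_
  rw [hint s has.le, ← Finset.sum_sub_distrib]
  exact Finset.sum_congr rfl fun k _ => by ring

noncomputable def radialTail (v : ℝ → ℝ) (m : ℕ) (s : ℝ) : ℝ :=
  ∫ t in Ioi s, (t ^ 2 - s ^ 2) ^ m * v t * t

lemma sq_sub_sq_pow_mul_eq_sum (m : ℕ) (x t y : ℝ) :
    (t ^ 2 - x ^ 2) ^ m * y * t =
      ∑ k ∈ Finset.range (m + 1),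
        (m.choose k : ℝ) * (-x ^ 2) ^ (m - k) * (y * t ^ (2 * k + 1)) := by
  rw [sub_eq_add_neg, add_pow, Finset.sum_mul, Finset.sum_mul]
  refine Finset.sum_congr rfl fun k _ => ?_
  ring

section

variable {v : ℝ → ℝ}

lemma hasDerivAt_radialTail_zero (hv : ContinuousOn v (Ioi 0)) (hdec : RapidDecay v) {s : ℝ}
    (hs : 0 < s) : HasDerivAt (radialTail v 0) (-(v s * s)) s := by
  have hf := hdec.integrableOn_Ioi_mul_pow hv 1 (half_pos hs)
  simp only [pow_one] at hf
  show HasDerivAt (fun x => ∫ t in Ioi x, (t ^ 2 - x ^ 2) ^ 0 * v t * t) _ _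
  simpa using hasDerivAt_integral_Ioi (half_lt_self hs) hf
    (hv.mul continuousOn_id |>.mono fun t ht => (half_pos hs).trans ht)

lemma hasDerivAt_radialTail_succ (hv : ContinuousOn v (Ioi 0)) (hdec : RapidDecay v) (m : ℕ)
    {s : ℝ} (hs : 0 < s) :
    HasDerivAt (radialTail v (m + 1)) (-(2 * (m + 1) * s) * radialTail v m s) s := by
  set S := Finset.range (m + 2)
  set p : ℕ → ℝ → ℝ := fun k x => ((m + 1).choose k : ℝ) * (-x ^ 2) ^ (m + 1 - k)
  set f : ℕ → ℝ → ℝ := fun k t => v t * t ^ (2 * k + 1)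
  have hp : ∀ k ∈ S, HasDerivAt (p k) (deriv (p k) s) s := fun k _ =>
    (show DifferentiableAt ℝ (fun x : ℝ => ((m + 1).choose k : ℝ) * (-x ^ 2) ^ (m + 1 - k)) s
      by fun_prop).hasDerivAt
  have hkernel : ∀ x t, (t ^ 2 - x ^ 2) ^ (m + 1) * v t * t = ∑ k ∈ S, p k x * f k t :=
    fun x t => sq_sub_sq_pow_mul_eq_sum (m + 1) x t (v t)
  -- The termwise derivative of the expanded kernel is found by uniqueness of derivatives.
  have hderiv : ∀ t, ∑ k ∈ S, deriv (p k) s * f k t =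
      -(2 * (m + 1) * s) * ((t ^ 2 - s ^ 2) ^ m * v t * t) := fun t => by
    have hsum : HasDerivAt (fun x => ∑ k ∈ S, p k x * f k t)
        (∑ k ∈ S, deriv (p k) s * f k t) s :=
      HasDerivAt.fun_sum fun k hk => (hp k hk).mul_const _
    have hpow : HasDerivAt (fun x => (t ^ 2 - x ^ 2) ^ (m + 1) * v t * t)
        (-(2 * (m + 1) * s) * ((t ^ 2 - s ^ 2) ^ m * v t * t)) s := by
      refine (((((hasDerivAt_pow 2 s).const_sub (t ^ 2)).fun_pow (m + 1)).mul_const (v t)).mul_const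
        t).congr_deriv ?_
      simp only [Nat.add_sub_cancel, Nat.cast_ofNat, Nat.cast_add, Nat.cast_one]
      ring
    simp only [hkernel] at hpow
    exact hsum.unique hpow
  -- The kernel vanishes on the diagonal `t = s`, so there is no boundary term.
  have hboundary : ∑ k ∈ S, p k s * f k s = 0 := by
    rw [← hkernel]
    simp
  have hf : ∀ k ∈ S, IntegrableOn (f k) (Ioi (s / 2)) := fun k _ =>
    hdec.integrableOn_Ioi_mul_pow hv _ (half_pos hs)
  have hfc : ∀ k ∈ S, ContinuousOn (f k) (Ioi (s / 2)) := fun k _ =>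
    (hv.mul (continuous_pow _).continuousOn).mono fun t ht => (half_pos hs).trans ht
  have htail : radialTail v (m + 1) = fun x => ∫ t in Ioi x, ∑ k ∈ S, p k x * f k t :=
    funext fun x => by simp only [radialTail, hkernel]
  rw [htail]
  convert hasDerivAt_integral_Ioi_sum_mul S (half_lt_self hs) hp hf hfc using 1
  simp only [hderiv, hboundary, sub_zero, integral_const_mul, radialTail]

lemma Dop_succ_apply_of_eqOn {k : ℕ} {f g : ℝ → ℝ} {s g' : ℝ} (h : EqOn (Dop k f) g (Ioi 0))
    (hg : HasDerivAt g g' s) (hs : 0 < s) : Dop (k + 1) f s = g' / (2 * s) := by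
  show deriv (Dop k f) s / (2 * s) = _
  rw [(h.eventuallyEq_of_mem (Ioi_mem_nhds hs)).deriv_eq, hg.deriv]

lemma eqOn_Dop_radialTail (hv : ContinuousOn v (Ioi 0)) (hdec : RapidDecay v) {m k : ℕ}
    (hk : k ≤ m) :
    EqOn (Dop k (radialTail v m))
      (fun s => (-1) ^ k * m.descFactorial k * radialTail v (m - k) s) (Ioi 0) := by
  induction k with
  | zero => intro s _; simp [Dop]
  | succ k ih =>
    intro s hs
    have hs0 : s ≠ 0 := ne_of_gt hs
    have hmk : m - k = m - (k + 1) + 1 := by omega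
    rw [hmk] at ih
    rw [Dop_succ_apply_of_eqOn (ih (by omega))
      ((hasDerivAt_radialTail_succ hv hdec _ hs).const_mul _) hs, Nat.descFactorial_succ, hmk]
    push_cast
    field_simp
    ring

end

/-- key computation, odd-dimensional case. -/
theorem stmt_10 (m : ℕ) (v : ℝ → ℝ) (hv : ContinuousOn v (Set.Ioi 0))
    (hdec : RapidDecay v) :
    ∀ r : ℝ, 0 < r →
      Dop m (fun s => ∫ t in Set.Ioi s, (t ^ 2 - s ^ 2) ^ m * v t * t) r =
        (-1 : ℝ) ^ m * (Nat.factorial m : ℝ) * ∫ t in Set.Ioi r, v t * t ∧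
      Dop (m + 1) (fun s => ∫ t in Set.Ioi s, (t ^ 2 - s ^ 2) ^ m * v t * t) r =
        (-1 : ℝ) ^ (m + 1) * ((Nat.factorial m : ℝ) / 2) * v r := by
  intro r hr
  change Dop m (radialTail v m) r = _ ∧ Dop (m + 1) (radialTail v m) r = _
  have hDop : EqOn (Dop m (radialTail v m))
      (fun s => (-1) ^ m * m.factorial * radialTail v 0 s) (Ioi 0) := by
    simpa [Nat.descFactorial_self] using eqOn_Dop_radialTail (m := m) (k := m) hv hdec le_rfl
  refine ⟨by rw [hDop hr]; simp [radialTail], ?_⟩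
  rw [Dop_succ_apply_of_eqOn hDop ((hasDerivAt_radialTail_zero hv hdec hr).const_mul _) hr]
  field_simp
  ring
end

section
/- Let m ≥ 1 be an integer and let v : (0,∞) → ℝ be continuous with sufficient decay at infinity (say, decaying faster than any polynomial). Then for every r > 0: D_r^m ∫_r^∞ (t² − r²)^(m − 1/2) v(t) t dt = (−1)^m (Γ(m + 1/2)/Γ(1/2)) ∫_r^∞ (t² − r²)^(−1/2) v(t) t dt, where D_r denotes the operator g ↦ (1/(2r)) dg/dr and D_r^m its m-fold iterate, and Γ is the Gamma function. -/
/-!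
Substituting `u = t²` turns `∫_r^∞ (t² - r²)^β v(t) t dt` into `W_β(r²) / 2`, where
`W_β(s) = ∫_s^∞ (u - s)^β w(u) du` and `w(u) = v(√u)`, and `D_r (g(r²)) = g'(r²)`. By Fubini,
`W_β(a) - W_β(b) = β ∫_a^b W_{β-1}` for `β > 0`, so `W_β' = -β W_{β-1}`. Applying `D_r` `m` times,
starting from `β = m - 1/2`, therefore produces `W_{-1/2}` with the factor
`(-1)^m (m - 1/2)(m - 3/2)⋯(1/2) = (-1)^m Γ(m + 1/2) / Γ(1/2)`.
-/

open MeasureTheory Filter Topology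

open Set

/-- Weyl's fractional integral of order `β + 1`, without the normalising factor `1 / Γ(β + 1)`. -/
noncomputable def weylIntegral (w : ℝ → ℝ) (β s : ℝ) : ℝ := ∫ u in Ioi s, (u - s) ^ β * w u

theorem RapidDecay.abs {w : ℝ → ℝ} (h : RapidDecay w) : RapidDecay fun u => |w u| := by
  simpa only [RapidDecay, abs_abs] using h

theorem RapidDecay.comp_sqrt {v : ℝ → ℝ} (h : RapidDecay v) : RapidDecay fun u => v √u := by
  intro n
  obtain ⟨C, hC⟩ := h (2 * n)
  refine ⟨C, fun u hu => ?_⟩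
  simpa only [pow_mul, Real.sq_sqrt (zero_le_one.trans hu)] using hC √u (Real.one_le_sqrt.2 hu)

section WeylIntegral

variable {w : ℝ → ℝ} {β : ℝ}

theorem continuousOn_rpow_mul_comp_add (hw : ContinuousOn w (Ioi 0)) {s : ℝ} (hs : 0 ≤ s) :
    ContinuousOn (fun x => x ^ β * w (s + x)) (Ioi 0) :=
  (continuousOn_id.rpow_const fun _ hx => Or.inl (ne_of_gt hx)).mul <|
    hw.comp (continuousOn_const.add continuousOn_id) fun _ hx => add_pos_of_nonneg_of_pos hs hx

/-- The bound is `M x ^ β` near `0` and `C x ^ (β - n)`, with `n > β + 1`, near infinity. -/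
theorem exists_integrableOn_bound_rpow_mul_comp_add (hw : ContinuousOn w (Ioi 0))
    (hdec : RapidDecay w) (hβ : -1 < β) {a b : ℝ} (ha : 0 < a) :
    ∃ g : ℝ → ℝ, IntegrableOn g (Ioi 0) ∧
      ∀ s ∈ Icc a b, ∀ x ∈ Ioi (0 : ℝ), ‖x ^ β * w (s + x)‖ ≤ g x := by
  obtain ⟨M, hM⟩ := (isCompact_Icc (a := a) (b := b + 1)).exists_bound_of_continuousOn
    (hw.mono fun _ hx => ha.trans_le hx.1)
  set n := ⌈β⌉₊ + 2
  obtain ⟨C, hC⟩ := hdec n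
  have hβn : β - n < -1 := by
    have := Nat.le_ceil β
    simp only [n, Nat.cast_add, Nat.cast_ofNat]
    linarith
  refine ⟨fun x => if x ≤ 1 then M * x ^ β else C * x ^ (β - n), ?_, ?_⟩
  · rw [← Ioc_union_Ioi_eq_Ioi zero_le_one]
    refine IntegrableOn.union ?_ ?_
    · have h : IntegrableOn (fun x : ℝ => x ^ β) (Ioc 0 1) :=
        (intervalIntegrable_iff_integrableOn_Ioc_of_le zero_le_one).1
          (intervalIntegral.intervalIntegrable_rpow' hβ)
      exact IntegrableOn.congr_fun (h.const_mul M) (fun x hx => by simp [hx.2]) measurableSet_Ioc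
    · exact IntegrableOn.congr_fun ((integrableOn_Ioi_rpow_of_lt hβn one_pos).const_mul C)
        (fun x (hx : 1 < x) => by simp [not_le.2 hx]) measurableSet_Ioi
  · intro s hs x (hx : 0 < x)
    rw [norm_mul, Real.norm_of_nonneg (Real.rpow_nonneg hx.le β)]
    dsimp only
    split_ifs with hx1
    · rw [mul_comm M]
      exact mul_le_mul_of_nonneg_left (hM _ ⟨by linarith [hs.1], by linarith [hs.2]⟩)
        (Real.rpow_nonneg hx.le β)
    · have hsx : x ≤ s + x := by linarith [hs.1]
      have hbound : ‖w (s + x)‖ * x ^ n ≤ C :=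
        (mul_le_mul_of_nonneg_left (pow_le_pow_left₀ hx.le hsx n) (norm_nonneg _)).trans
          (hC _ (by linarith))
      calc x ^ β * ‖w (s + x)‖ ≤ x ^ β * (C / x ^ n) :=
            mul_le_mul_of_nonneg_left ((le_div_iff₀ (by positivity)).2 hbound)
              (Real.rpow_nonneg hx.le β)
        _ = C * x ^ (β - n) := by
            rw [Real.rpow_sub hx, Real.rpow_natCast]
            ring

theorem integrableOn_rpow_mul_comp_add (hw : ContinuousOn w (Ioi 0)) (hdec : RapidDecay w)
    (hβ : -1 < β) {s : ℝ} (hs : 0 < s) :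
    IntegrableOn (fun x => x ^ β * w (s + x)) (Ioi 0) := by
  obtain ⟨g, hg, hbound⟩ := exists_integrableOn_bound_rpow_mul_comp_add hw hdec hβ hs (b := s)
  refine hg.mono' ((continuousOn_rpow_mul_comp_add hw hs.le).aestronglyMeasurable
    measurableSet_Ioi) ((ae_restrict_iff' measurableSet_Ioi).2 (ae_of_all _ ?_))
  exact hbound s ⟨le_rfl, le_rfl⟩

theorem weylIntegral_eq_setIntegral_Ioi_zero (w : ℝ → ℝ) (β s : ℝ) :
    weylIntegral w β s = ∫ x in Ioi 0, x ^ β * w (s + x) := by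
  have h := (measurePreserving_add_right volume s).setIntegral_preimage_emb
    (measurableEmbedding_addRight s) (fun u => (u - s) ^ β * w u) (Ioi s)
  rw [show (· + s) ⁻¹' Ioi s = Ioi 0 by ext; simp] at h
  simp only [add_comm _ s, add_sub_cancel_left] at h
  exact h.symm

theorem integrableOn_rpow_sub_mul (hw : ContinuousOn w (Ioi 0)) (hdec : RapidDecay w)
    (hβ : -1 < β) {s : ℝ} (hs : 0 < s) :
    IntegrableOn (fun u => (u - s) ^ β * w u) (Ioi s) := by
  have h := integrableOn_rpow_mul_comp_add hw hdec hβ hs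
  rw [← (measurePreserving_add_right volume s).integrableOn_comp_preimage
    (measurableEmbedding_addRight s), show (· + s) ⁻¹' Ioi s = Ioi 0 by ext; simp]
  simpa only [Function.comp_def, add_comm _ s, add_sub_cancel_left] using h

theorem continuousOn_weylIntegral (hw : ContinuousOn w (Ioi 0)) (hdec : RapidDecay w)
    (hβ : -1 < β) : ContinuousOn (weylIntegral w β) (Ioi 0) := by
  intro s₀ (hs₀ : 0 < s₀)
  refine ContinuousAt.continuousWithinAt ?_
  simp only [funext (weylIntegral_eq_setIntegral_Ioi_zero w β)]
  obtain ⟨g, hg, hbound⟩ :=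
    exists_integrableOn_bound_rpow_mul_comp_add hw hdec hβ (half_pos hs₀) (b := 2 * s₀)
  have hnhds : Ioo (s₀ / 2) (2 * s₀) ∈ 𝓝 s₀ := Ioo_mem_nhds (by linarith) (by linarith)
  refine continuousAt_of_dominated (bound := g) ?_ ?_ hg ?_
  · filter_upwards [hnhds] with s hs
    exact (continuousOn_rpow_mul_comp_add hw (by linarith [hs.1])).aestronglyMeasurable
      measurableSet_Ioi
  · filter_upwards [hnhds] with s hs
    exact (ae_restrict_iff' measurableSet_Ioi).2 <| ae_of_all _ <|
      hbound s (Ioo_subset_Icc_self hs)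
  · refine (ae_restrict_iff' measurableSet_Ioi).2 (ae_of_all _ fun x (hx : 0 < x) => ?_)
    exact continuousAt_const.mul <| (hw.continuousAt (Ioi_mem_nhds (by linarith))).comp
      (continuousAt_id.const_add x |>.congr (by simp [add_comm]))
theorem ite_rpow_sub_mul_eq_indicator (w : ℝ → ℝ) (γ σ : ℝ) :
    (fun u => (if σ < u then (u - σ) ^ γ else 0) * w u) =
      (Ioi σ).indicator fun u => (u - σ) ^ γ * w u := by
  ext u
  by_cases hu : σ < u <;> simp [hu]

theorem setIntegral_Ioi_ite_mul_eq_weylIntegral (w : ℝ → ℝ) (γ : ℝ) {a σ : ℝ} (h : a ≤ σ) :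
    ∫ u in Ioi a, (if σ < u then (u - σ) ^ γ else 0) * w u = weylIntegral w γ σ := by
  rw [ite_rpow_sub_mul_eq_indicator, setIntegral_indicator measurableSet_Ioi, Ioi_inter_Ioi,
    max_eq_right h, weylIntegral]

theorem integrableOn_ite_rpow_sub_mul (hw : ContinuousOn w (Ioi 0)) (hdec : RapidDecay w)
    {γ : ℝ} (hγ : -1 < γ) {a σ : ℝ} (hσ : 0 < σ) :
    IntegrableOn (fun u => (if σ < u then (u - σ) ^ γ else 0) * w u) (Ioi a) := by
  rw [ite_rpow_sub_mul_eq_indicator]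
  exact ((integrableOn_rpow_sub_mul hw hdec hγ hσ).integrable_indicator
    measurableSet_Ioi).integrableOn

theorem integral_Ioc_ite_rpow_sub (hβ : 0 < β) {a b u : ℝ} (hab : a ≤ b) (hau : a < u) :
    ∫ σ in Ioc a b, (if σ < u then (u - σ) ^ (β - 1) else 0) =
      ((u - a) ^ β - if b < u then (u - b) ^ β else 0) / β := by
  have hprim : ∀ c, ∫ σ in a..c, (u - σ) ^ (β - 1) = ((u - a) ^ β - (u - c) ^ β) / β := fun c => by
    rw [intervalIntegral.integral_comp_sub_left (fun y => y ^ (β - 1)) u,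
      integral_rpow (Or.inl (by linarith)), sub_add_cancel]
  by_cases hbu : b < u
  · rw [if_pos hbu, ← hprim b, intervalIntegral.integral_of_le hab]
    exact setIntegral_congr_fun measurableSet_Ioc fun σ hσ => if_pos (hσ.2.trans_lt hbu)
  · replace hbu := not_lt.1 hbu
    have hind : (fun σ => if σ < u then (u - σ) ^ (β - 1) else 0) =
        (Iio u).indicator fun σ => (u - σ) ^ (β - 1) := by
      ext σ
      simp [indicator_apply]
    have hset : Ioc a b ∩ Iio u = Ioo a u :=
      Set.ext fun σ => ⟨fun h => ⟨h.1.1, h.2⟩, fun h => ⟨⟨h.1, h.2.le.trans hbu⟩, h.2⟩⟩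
    rw [if_neg (not_lt.2 hbu), hind, setIntegral_indicator measurableSet_Iio, hset,
      ← integral_Ioc_eq_integral_Ioo, ← intervalIntegral.integral_of_le hau.le,
      hprim u, sub_self, Real.zero_rpow hβ.ne']

theorem integrable_prod_ite_rpow_sub_mul (hw : ContinuousOn w (Ioi 0)) (hdec : RapidDecay w)
    {γ : ℝ} (hγ : -1 < γ) {a : ℝ} (ha : 0 < a) (b : ℝ) :
    Integrable (fun p : ℝ × ℝ => (if p.1 < p.2 then (p.2 - p.1) ^ γ else 0) * w p.2)
      ((volume.restrict (Ioc a b)).prod (volume.restrict (Ioi a))) := by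
  have hmeas : AEStronglyMeasurable
      (fun p : ℝ × ℝ => (if p.1 < p.2 then (p.2 - p.1) ^ γ else 0) * w p.2)
      ((volume.restrict (Ioc a b)).prod (volume.restrict (Ioi a))) :=
    (Measurable.ite (measurableSet_lt measurable_fst measurable_snd) (by fun_prop)
      measurable_const).aestronglyMeasurable.mul
      ((hw.mono (Ioi_subset_Ioi ha.le)).aestronglyMeasurable measurableSet_Ioi).comp_snd
  refine (integrable_prod_iff hmeas).2 ⟨?_, ?_⟩
  · exact (ae_restrict_iff' measurableSet_Ioc).2 <| ae_of_all _ fun σ hσ =>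
      integrableOn_ite_rpow_sub_mul hw hdec hγ (ha.trans hσ.1)
  · have hnorm : ∀ σ ∈ Ioc a b, ∫ u in Ioi a, ‖(if σ < u then (u - σ) ^ γ else 0) * w u‖ =
        weylIntegral (fun u => |w u|) γ σ := fun σ hσ => by
      rw [← setIntegral_Ioi_ite_mul_eq_weylIntegral _ γ hσ.1.le]
      refine setIntegral_congr_fun measurableSet_Ioi fun u _ => ?_
      by_cases hu : σ < u
      · simp [hu, abs_of_nonneg (Real.rpow_nonneg (sub_nonneg.2 hu.le) γ)]
      · simp [hu]
    have hcont : ContinuousOn (weylIntegral (fun u => |w u|) γ) (Icc a b) :=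
      (continuousOn_weylIntegral hw.abs hdec.abs hγ).mono fun σ hσ => ha.trans_le hσ.1
    exact (hcont.integrableOn_Icc.mono_set Ioc_subset_Icc_self).congr_fun
      (fun σ hσ => (hnorm σ hσ).symm) measurableSet_Ioc

theorem weylIntegral_sub_weylIntegral (hw : ContinuousOn w (Ioi 0)) (hdec : RapidDecay w)
    (hβ : 0 < β) {a b : ℝ} (ha : 0 < a) (hab : a ≤ b) :
    weylIntegral w β a - weylIntegral w β b = β * ∫ σ in a..b, weylIntegral w (β - 1) σ := by
  have hfubini := integral_integral_swap
    (f := fun σ u => (if σ < u then (u - σ) ^ (β - 1) else 0) * w u)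
    (integrable_prod_ite_rpow_sub_mul hw hdec (by linarith) ha b)
  have hinner_u : ∀ σ ∈ Ioc a b,
      ∫ u in Ioi a, (if σ < u then (u - σ) ^ (β - 1) else 0) * w u = weylIntegral w (β - 1) σ :=
    fun σ hσ => setIntegral_Ioi_ite_mul_eq_weylIntegral w _ hσ.1.le
  have hinner_σ : ∀ u ∈ Ioi a, ∫ σ in Ioc a b, (if σ < u then (u - σ) ^ (β - 1) else 0) * w u =
      β⁻¹ * ((u - a) ^ β * w u - (if b < u then (u - b) ^ β else 0) * w u) := fun u hu => by
    rw [integral_mul_const, integral_Ioc_ite_rpow_sub hβ hab hu]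
    ring
  rw [setIntegral_congr_fun measurableSet_Ioc hinner_u,
    setIntegral_congr_fun measurableSet_Ioi hinner_σ, integral_const_mul,
    integral_sub (integrableOn_rpow_sub_mul hw hdec (by linarith) ha)
      (integrableOn_ite_rpow_sub_mul hw hdec (by linarith) (ha.trans_le hab)),
    setIntegral_Ioi_ite_mul_eq_weylIntegral w β hab, ← intervalIntegral.integral_of_le hab]
    at hfubini
  rw [hfubini, weylIntegral]
  field_simp

theorem hasDerivAt_weylIntegral (hw : ContinuousOn w (Ioi 0)) (hdec : RapidDecay w)
    (hβ : 0 < β) {s : ℝ} (hs : 0 < s) :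
    HasDerivAt (weylIntegral w β) (-β * weylIntegral w (β - 1) s) s := by
  have hcont := continuousOn_weylIntegral hw hdec (β := β - 1) (by linarith)
  have hint : IntervalIntegrable (weylIntegral w (β - 1)) volume (s / 2) s := by
    refine (hcont.mono ?_).intervalIntegrable
    rw [uIcc_of_le (half_le_self hs.le)]
    exact fun σ hσ => (half_pos hs).trans_le hσ.1
  have hFTC := intervalIntegral.integral_hasDerivAt_right hint
    (hcont.stronglyMeasurableAtFilter isOpen_Ioi s hs) (hcont.continuousAt (Ioi_mem_nhds hs))
  refine ((hFTC.const_mul β).const_sub (weylIntegral w β (s / 2))).congr_of_eventuallyEq ?_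
    |>.congr_deriv (by ring)
  filter_upwards [Ioi_mem_nhds (half_lt_self hs)] with σ hσ
  linarith [weylIntegral_sub_weylIntegral hw hdec hβ (half_pos hs) (le_of_lt hσ)]

end WeylIntegral

theorem setIntegral_Ioi_sq_sub_sq_rpow_mul (v : ℝ → ℝ) (β : ℝ) {r : ℝ} (hr : 0 ≤ r) :
    ∫ t in Ioi r, (t ^ 2 - r ^ 2) ^ β * v t * t = weylIntegral (fun u => v √u) β (r ^ 2) / 2 := by
  have hmono : StrictMonoOn (fun t : ℝ => t ^ 2) (Ici r) :=
    (pow_left_strictMonoOn₀ two_ne_zero).mono (Ici_subset_Ici.2 hr)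
  have himage : (fun t : ℝ => t ^ 2) '' Ioi r = Ioi (r ^ 2) :=
    hmono.image_Ioi_subset.antisymm fun u (hu : r ^ 2 < u) =>
      ⟨√u, (Real.lt_sqrt hr).2 hu, Real.sq_sqrt ((sq_nonneg r).trans hu.le)⟩
  have hderiv : ∀ t ∈ Ioi r, HasDerivWithinAt (fun t : ℝ => t ^ 2) (2 * t) (Ioi r) t :=
    fun t _ => by simpa using (hasDerivAt_pow 2 t).hasDerivWithinAt
  rw [weylIntegral, ← himage, integral_image_eq_integral_abs_deriv_smul measurableSet_Ioi hderiv
    (hmono.injOn.mono Ioi_subset_Ici_self), ← integral_div]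
  refine setIntegral_congr_fun measurableSet_Ioi fun t (ht : r < t) => ?_
  rw [smul_eq_mul, abs_of_nonneg (by linarith), Real.sqrt_sq (by linarith)]
  ring

theorem Dop_succ_apply_of_eventuallyEq {f G : ℝ → ℝ} {k : ℕ} {ρ G' : ℝ} (hρ : ρ ≠ 0)
    (hf : Dop k f =ᶠ[𝓝 ρ] fun r => G (r ^ 2)) (hG : HasDerivAt G G' (ρ ^ 2)) :
    Dop (k + 1) f ρ = G' := by
  show deriv (Dop k f) ρ / (2 * ρ) = G'
  have hsq : HasDerivAt (fun r : ℝ => r ^ 2) (2 * ρ) ρ := by simpa using hasDerivAt_pow 2 ρ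
  have hcomp : HasDerivAt (fun r => G (r ^ 2)) (G' * (2 * ρ)) ρ :=
    HasDerivAt.comp (h := fun r : ℝ => r ^ 2) ρ hG hsq
  rw [hf.deriv_eq, hcomp.deriv]
  field_simp

theorem Dop_apply_eq_mul_weylIntegral {w f : ℝ → ℝ} (hw : ContinuousOn w (Ioi 0))
    (hdec : RapidDecay w) {c β : ℝ} (hf : ∀ r > 0, f r = c * weylIntegral w β (r ^ 2)) (k : ℕ)
    (hk : (k : ℝ) - 1 < β) {ρ : ℝ} (hρ : 0 < ρ) :
    Dop k f ρ =
      c * (-1) ^ k * (∏ i ∈ Finset.range k, (β - i)) * weylIntegral w (β - k) (ρ ^ 2) := by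
  induction k generalizing ρ with
  | zero => simp [Dop, hf ρ hρ]
  | succ k ih =>
    push_cast at hk
    have hprev : Dop k f =ᶠ[𝓝 ρ] fun r => c * (-1) ^ k * (∏ i ∈ Finset.range k, (β - i)) *
        weylIntegral w (β - k) (r ^ 2) := by
      filter_upwards [Ioi_mem_nhds hρ] with r hr
      exact ih (by linarith) hr
    rw [Dop_succ_apply_of_eventuallyEq hρ.ne' hprev
      ((hasDerivAt_weylIntegral hw hdec (by linarith) (by positivity)).const_mul _),
      Finset.prod_range_succ, pow_succ, show β - ((k + 1 : ℕ) : ℝ) = β - k - 1 by push_cast; ring]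
    ring

theorem prod_range_sub_mul_Gamma_sub_add_one {β : ℝ} (k : ℕ) (hk : (k : ℝ) - 1 < β) :
    (∏ i ∈ Finset.range k, (β - i)) * Real.Gamma (β - k + 1) = Real.Gamma (β + 1) := by
  induction k with
  | zero => simp
  | succ k ih =>
    push_cast at hk
    rw [← ih (by linarith), Finset.prod_range_succ,
      show β - ((k + 1 : ℕ) : ℝ) + 1 = β - k by push_cast; ring,
      Real.Gamma_add_one (sub_pos.2 (by linarith)).ne']
    ring

theorem stmt_11_general (m : ℕ) (v : ℝ → ℝ) (hv : ContinuousOn v (Set.Ioi 0))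
    (hdec : RapidDecay v) :
    ∀ r : ℝ, 0 < r →
      Dop m (fun s => ∫ t in Set.Ioi s, (t ^ 2 - s ^ 2) ^ ((m : ℝ) - 1 / 2) * v t * t) r =
        (-1 : ℝ) ^ m * (Real.Gamma ((m : ℝ) + 1 / 2) / Real.Gamma (1 / 2)) *
          ∫ t in Set.Ioi r, (t ^ 2 - r ^ 2) ^ (-(1 : ℝ) / 2) * v t * t := by
  intro r hr
  have hw : ContinuousOn (fun u => v √u) (Ioi 0) :=
    hv.comp Real.continuous_sqrt.continuousOn fun u hu => Real.sqrt_pos.2 hu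
  have hΓ := prod_range_sub_mul_Gamma_sub_add_one (β := m - 1 / 2) m (by linarith)
  rw [show (m : ℝ) - 1 / 2 - m + 1 = 1 / 2 by ring, show (m : ℝ) - 1 / 2 + 1 = m + 1 / 2 by ring]
    at hΓ
  rw [Dop_apply_eq_mul_weylIntegral hw hdec.comp_sqrt (c := 1 / 2)
      (fun s hs => by rw [setIntegral_Ioi_sq_sub_sq_rpow_mul v _ hs.le]; ring) m (by linarith) hr,
    setIntegral_Ioi_sq_sub_sq_rpow_mul v _ hr.le, ← hΓ, show (m : ℝ) - 1 / 2 - m = -1 / 2 by ring,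
    mul_div_cancel_right₀ _ (Real.Gamma_pos_of_pos one_half_pos).ne']
  ring

/-- key computation, even-dimensional case. -/
theorem stmt_11 (m : ℕ) (hm : 1 ≤ m) (v : ℝ → ℝ) (hv : ContinuousOn v (Set.Ioi 0))
    (hdec : RapidDecay v) :
    ∀ r : ℝ, 0 < r →
      Dop m (fun s => ∫ t in Set.Ioi s, (t ^ 2 - s ^ 2) ^ ((m : ℝ) - 1 / 2) * v t * t) r =
        (-1 : ℝ) ^ m * (Real.Gamma ((m : ℝ) + 1 / 2) / Real.Gamma (1 / 2)) *
          ∫ t in Set.Ioi r, (t ^ 2 - r ^ 2) ^ (-(1 : ℝ) / 2) * v t * t :=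
  stmt_11_general m v hv hdec
end
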